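/- With H_p(θ,ω) := −(cos θ − ½)² + ½ω² and P(θ,ω) := γ(H_p(θ,ω) − H_p*), γ > 0, H_p* := −(cos θ* − ½)² for some θ* ∈ (−π/3, π/3), the function Φ := H_p − H_p* satisfies along solutions of the closed-loop pendulum of the previous context: Φ̇ = −γ ω² (cos θ)² Φ. Consequently, for every ε > 0 the set {(θ,ω) : |Φ(θ,ω)| < ε} is forward invariant. -/

import Mathlib

/-!
Along the closed loop, `d/dt H_p = ω cos θ (2 sin θ − u)`, and the feedback
`u = 2 sin θ + ω P cos θ` turns this into `−ω² cos² θ · P = −γ ω² cos² θ · Φ`.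
A function whose derivative is `−g · f` with `g ≥ 0` has `d/dt f² = −2 g f² ≤ 0`,
so `|Φ|` is nonincreasing in time and every sublevel set `{|Φ| < ε}` is forward invariant.
-/

open Real

theorem hasDerivAt_pendulum_energy {θ ω u : ℝ → ℝ} {t : ℝ}
    (hθ : HasDerivAt θ (ω t) t)
    (hω : HasDerivAt ω (sin (θ t) - u t * cos (θ t)) t) :
    HasDerivAt (fun s => -(cos (θ s) - 1 / 2) ^ 2 + 1 / 2 * ω s ^ 2)
      (ω t * cos (θ t) * (2 * sin (θ t) - u t)) t := by
  have hcos : HasDerivAt (fun s => cos (θ s)) (-sin (θ t) * ω t) t :=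
    (hasDerivAt_cos (θ t)).comp t hθ
  refine (((hcos.sub_const (1 / 2)).fun_pow 2).neg.add
    ((hω.fun_pow 2).const_mul (1 / 2))).congr_deriv ?_
  simp only [Nat.cast_ofNat]
  ring

theorem antitone_abs_of_hasDerivAt_neg_mul {f g : ℝ → ℝ}
    (hf : ∀ t, HasDerivAt f (-g t * f t) t) (hg : ∀ t, 0 ≤ g t) :
    Antitone fun t => |f t| := by
  have hsq : Antitone fun t => f t ^ 2 := by
    refine antitone_of_hasDerivAt_nonpos (fun t => (hf t).fun_pow 2) fun t => ?_
    have : 0 ≤ g t * f t ^ 2 := mul_nonneg (hg t) (sq_nonneg _)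
    simp only [Pi.zero_apply, Nat.cast_ofNat, Nat.add_one_sub_one, pow_one]
    nlinarith
  exact fun s t hst => sq_le_sq.mp (hsq hst)

theorem stmt_12_general (γ : ℝ) (hγ : 0 < γ)
    (Hp : ℝ × ℝ → ℝ)
    (hHp : ∀ p : ℝ × ℝ, Hp p = -(Real.cos p.1 - 1 / 2) ^ 2 + (1 / 2) * p.2 ^ 2)
    (Hps : ℝ)
    (P Φ : ℝ × ℝ → ℝ)
    (hP : ∀ p, P p = γ * (Hp p - Hps))
    (hΦ : ∀ p, Φ p = Hp p - Hps)
    (θ ω u : ℝ → ℝ)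
    (hu : ∀ t, u t = 2 * Real.sin (θ t)
        + ω t * P (θ t, ω t) * Real.cos (θ t))
    (hθ : ∀ t, HasDerivAt θ (ω t) t)
    (hω : ∀ t, HasDerivAt ω (Real.sin (θ t) - u t * Real.cos (θ t)) t) :
    (∀ t, HasDerivAt (fun s => Φ (θ s, ω s))
        (-γ * (ω t) ^ 2 * (Real.cos (θ t)) ^ 2 * Φ (θ t, ω t)) t) ∧
    (∀ ε > 0, |Φ (θ 0, ω 0)| < ε → ∀ t, 0 ≤ t → |Φ (θ t, ω t)| < ε) := by
  have hΦ_eq : ∀ p, Φ p = -(cos p.1 - 1 / 2) ^ 2 + 1 / 2 * p.2 ^ 2 - Hps := fun p => by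
    rw [hΦ, hHp]
  have hderiv : ∀ t, HasDerivAt (fun s => Φ (θ s, ω s))
      (-γ * ω t ^ 2 * cos (θ t) ^ 2 * Φ (θ t, ω t)) t := fun t => by
    simp only [hΦ_eq]
    refine ((hasDerivAt_pendulum_energy (hθ t) (hω t)).sub_const Hps).congr_deriv ?_
    rw [hu, hP, hHp]
    ring
  refine ⟨hderiv, fun ε _ h0 t ht => lt_of_le_of_lt ?_ h0⟩
  exact antitone_abs_of_hasDerivAt_neg_mul (g := fun t => γ * ω t ^ 2 * cos (θ t) ^ 2)
    (fun t => by simpa only [neg_mul] using hderiv t) (fun t => by positivity) ht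

/-- With P = γ(H_p − H_p*) and Φ = H_p − H_p*, along closed-loop pendulum
solutions Φ̇ = −γ ω² (cos θ)² Φ; consequently, each set {|Φ| < ε} is forward
invariant. -/
theorem stmt_12 (γ θs : ℝ) (hγ : 0 < γ)
    (hθs : θs ∈ Set.Ioo (-(Real.pi / 3)) (Real.pi / 3))
    (Hp : ℝ × ℝ → ℝ)
    (hHp : ∀ p : ℝ × ℝ, Hp p = -(Real.cos p.1 - 1 / 2) ^ 2 + (1 / 2) * p.2 ^ 2)
    (Hps : ℝ) (hHps : Hps = -(Real.cos θs - 1 / 2) ^ 2)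
    (P Φ : ℝ × ℝ → ℝ)
    (hP : ∀ p, P p = γ * (Hp p - Hps))
    (hΦ : ∀ p, Φ p = Hp p - Hps)
    (θ ω u : ℝ → ℝ)
    (hu : ∀ t, u t = 2 * Real.sin (θ t)
        + ω t * P (θ t, ω t) * Real.cos (θ t))
    (hθ : ∀ t, HasDerivAt θ (ω t) t)
    (hω : ∀ t, HasDerivAt ω (Real.sin (θ t) - u t * Real.cos (θ t)) t) :
    (∀ t, HasDerivAt (fun s => Φ (θ s, ω s))
        (-γ * (ω t) ^ 2 * (Real.cos (θ t)) ^ 2 * Φ (θ t, ω t)) t) ∧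
    (∀ ε > 0, |Φ (θ 0, ω 0)| < ε → ∀ t, 0 ≤ t → |Φ (θ t, ω t)| < ε) :=
  stmt_12_general γ hγ Hp hHp Hps P Φ hP hΦ θ ω u hu hθ hω
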